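/- Let P be a finite weak poc set with dual graph Γ (vertices P°, edges joining u, v with |u \ v| = 1), and let T ⊆ P be coherent with K := {v ∈ P° : T ⊆ v} nonempty. Then for every u ∈ P°, the vertex p(u) := (u \ down(T*)) ∪ up(T) is the unique vertex of K at minimal distance Δ(u, K), and Δ(u, p(u)) = |u ∩ down(T*)|. -/

import Mathlib

/-!
Write `U = up T` and `D = down T*`. Since `*` is an order-reversing involution, it swaps `U`
and `D`, and coherence of `T` makes them disjoint. Every vertex `v ⊇ T` contains `U` and misses
`D`, so it disagrees with `u` at least on `u ∩ D`. Flipping `u` on `D` into `U` gives the vertex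
`p(u) = (u \ D) ∪ U`, which disagrees with `u` exactly on `u ∩ D`. If `v ⊇ T` is another vertex
that close to `u`, then `p(u) ⊆ v`, and two complete selections one inside the other coincide.
-/

def up {P : Type*} [PartialOrder P] (A : Set P) : Set P := {p | ∃ a ∈ A, a ≤ p}

def down {P : Type*} [PartialOrder P] (A : Set P) : Set P := {q | ∃ a ∈ A, q ≤ a}

def Coherent {P : Type*} [PartialOrder P] (s : P → P) (S : Set P) : Prop :=
  ∀ b ∈ S, ∀ c ∈ S, ¬ b ≤ s c

def coh {P : Type*} [PartialOrder P] (s : P → P) (A : Set P) : Set P :=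
  up A \ down (s '' A)

/-- A complete *-selection: contains exactly one of each pair `{a, a*}`. -/
def CompleteSel {P : Type*} (s : P → P) (A : Set P) : Prop :=
  ∀ a : P, a ∈ A ↔ s a ∉ A

/-- The vertex set of the dual cubing: coherent complete *-selections. -/
def PocDual {P : Type*} [PartialOrder P] (s : P → P) : Set (Set P) :=
  {u | CompleteSel s u ∧ Coherent s u}

open Set

lemma CompleteSel.eq_of_subset {P : Type*} {s : P → P} {A B : Set P} (hA : CompleteSel s A)
    (hB : CompleteSel s B) (hAB : A ⊆ B) : A = B :=
  hAB.antisymm fun a haB => (hA a).2 fun hsa => (hB a).1 haB (hAB hsa)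

section PocSet

variable {P : Type*} [PartialOrder P] {s : P → P}

lemma subset_up (A : Set P) : A ⊆ up A := fun a ha => ⟨a, ha, le_rfl⟩

lemma isUpperSet_up (A : Set P) : IsUpperSet (up A) :=
  fun _ _ hab ⟨t, ht, hta⟩ => ⟨t, ht, hta.trans hab⟩

lemma isLowerSet_down (A : Set P) : IsLowerSet (down A) :=
  fun _ _ hba ⟨t, ht, hat⟩ => ⟨t, ht, hba.trans hat⟩

lemma mem_down_image_iff (hinv : ∀ a, s (s a) = a) (hrev : ∀ a b, a ≤ b → s b ≤ s a)
    {T : Set P} {a : P} : a ∈ down (s '' T) ↔ s a ∈ up T := by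
  constructor
  · rintro ⟨-, ⟨t, ht, rfl⟩, hat⟩
    exact ⟨t, ht, hinv t ▸ hrev _ _ hat⟩
  · rintro ⟨t, ht, hta⟩
    exact ⟨s t, ⟨t, ht, rfl⟩, hinv a ▸ hrev _ _ hta⟩

lemma Coherent.disjoint_up_down {T : Set P} (hT : Coherent s T) :
    Disjoint (up T) (down (s '' T)) := by
  rw [Set.disjoint_left]
  rintro a ⟨t, ht, hta⟩ ⟨-, ⟨b, hb, rfl⟩, hab⟩
  exact hT t ht b hb (hta.trans hab)

lemma up_subset_of_mem_pocDual (hinv : ∀ a, s (s a) = a) {T v : Set P} (hv : v ∈ PocDual s)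
    (hTv : T ⊆ v) : up T ⊆ v := by
  rintro a ⟨t, ht, hta⟩
  by_contra hav
  exact hv.2 t (hTv ht) (s a) ((hv.1 (s a)).2 (by rwa [hinv])) (by rwa [hinv])

lemma Coherent.disjoint_down {T v : Set P} (hv : Coherent s v) (hTv : T ⊆ v) :
    Disjoint v (down (s '' T)) := by
  rw [Set.disjoint_left]
  rintro a hav ⟨-, ⟨b, hb, rfl⟩, hab⟩
  exact hv a hav b (hTv hb) hab

/-- The projection `p(u)` onto `K = {v ∈ P° | T ⊆ v}`. -/
def pocProj (s : P → P) (T u : Set P) : Set P := (u \ down (s '' T)) ∪ up T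

lemma diff_pocProj {T u : Set P} (hT : Coherent s T) :
    u \ pocProj s T u = u ∩ down (s '' T) := by
  ext a
  have : a ∈ up T → a ∉ down (s '' T) := fun h => Set.disjoint_left.1 hT.disjoint_up_down h
  simp only [pocProj, mem_sdiff, mem_union, mem_inter_iff]
  tauto

lemma pocProj_subset (hinv : ∀ a, s (s a) = a) {T u v : Set P} (hv : v ∈ PocDual s)
    (hTv : T ⊆ v) (huv : u \ v ⊆ down (s '' T)) : pocProj s T u ⊆ v := by
  rintro a (⟨hau, haD⟩ | haU)
  · by_contra hav
    exact haD (huv ⟨hau, hav⟩)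
  · exact up_subset_of_mem_pocDual hinv hv hTv haU

variable (hinv : ∀ a, s (s a) = a) (hrev : ∀ a b, a ≤ b → s b ≤ s a) {T u : Set P}
include hinv hrev

lemma completeSel_pocProj (hT : Coherent s T) (hu : CompleteSel s u) :
    CompleteSel s (pocProj s T u) := by
  intro a
  have hD : a ∈ down (s '' T) ↔ s a ∈ up T := mem_down_image_iff hinv hrev
  have hU : a ∈ up T ↔ s a ∈ down (s '' T) := by rw [mem_down_image_iff hinv hrev, hinv]
  have ha : a ∈ up T → a ∉ down (s '' T) := fun h => Set.disjoint_left.1 hT.disjoint_up_down h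
  have hsa : s a ∈ up T → s a ∉ down (s '' T) := fun h =>
    Set.disjoint_left.1 hT.disjoint_up_down h
  have hua := hu a
  simp only [pocProj, mem_union, mem_sdiff]
  tauto

lemma coherent_pocProj (hT : Coherent s T) (hu : Coherent s u) :
    Coherent s (pocProj s T u) := by
  have hflip : ∀ {c}, c ∈ up T → s c ∈ down (s '' T) := fun hc =>
    (mem_down_image_iff hinv hrev).2 (by rwa [hinv])
  have hcross : ∀ {b c}, b ∈ up T → b ≤ s c → c ∈ down (s '' T) := fun hb hbc =>
    (mem_down_image_iff hinv hrev).2 (isUpperSet_up T hbc hb)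
  rintro b (⟨hbu, hbD⟩ | hbU) c (⟨hcu, hcD⟩ | hcU) hbc
  · exact hu b hbu c hcu hbc
  · exact hbD (isLowerSet_down _ hbc (hflip hcU))
  · exact hcD (hcross hbU hbc)
  · exact Set.disjoint_left.1 hT.disjoint_up_down hcU (hcross hbU hbc)

end PocSet

theorem closest_point_projection_general {P : Type*} [PartialOrder P] [Fintype P]
    (s : P → P)
    (hinv : ∀ a : P, s (s a) = a)
    (hrev : ∀ a b : P, a ≤ b → s b ≤ s a)
    (T : Set P) (hT : Coherent s T)
    (u : Set P) (hu : u ∈ PocDual s) :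
    (u \ down (s '' T)) ∪ up T ∈ {v ∈ PocDual s | T ⊆ v} ∧
    (u \ ((u \ down (s '' T)) ∪ up T)).ncard = (u ∩ down (s '' T)).ncard ∧
    (∀ v ∈ {v ∈ PocDual s | T ⊆ v},
      (u \ ((u \ down (s '' T)) ∪ up T)).ncard ≤ (u \ v).ncard ∧
      ((u \ v).ncard ≤ (u \ ((u \ down (s '' T)) ∪ up T)).ncard →
        v = (u \ down (s '' T)) ∪ up T)) := by
  have hsel : CompleteSel s (pocProj s T u) := completeSel_pocProj hinv hrev hT hu.1
  have hcoh : Coherent s (pocProj s T u) := coherent_pocProj hinv hrev hT hu.2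
  have hdiff : u \ pocProj s T u = u ∩ down (s '' T) := diff_pocProj hT
  refine ⟨⟨⟨hsel, hcoh⟩, (subset_up T).trans subset_union_right⟩, congrArg ncard hdiff,
    ?_⟩
  rintro v ⟨hv, hTv⟩
  have hsub : u ∩ down (s '' T) ⊆ u \ v := fun a ⟨hau, haD⟩ =>
    ⟨hau, fun hav => Set.disjoint_left.1 (hv.2.disjoint_down hTv) hav haD⟩
  change (u \ pocProj s T u).ncard ≤ _ ∧ (_ ≤ (u \ pocProj s T u).ncard → v = pocProj s T u)
  rw [hdiff]
  refine ⟨ncard_le_ncard hsub, fun hle => ?_⟩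
  have heq : u ∩ down (s '' T) = u \ v := eq_of_subset_of_ncard_le hsub hle
  exact (hsel.eq_of_subset hv.1 (pocProj_subset hinv hv hTv (heq ▸ inter_subset_right))).symm

/-- The vertex p(u) = (u \ down(T*)) ∪ up(T) is the unique vertex of
K = {v ∈ P° : T ⊆ v} at minimal distance from u, and this distance equals
|u ∩ down(T*)|. -/
theorem closest_point_projection {P : Type*} [PartialOrder P] [Fintype P] [OrderBot P]
    (s : P → P)
    (hinv : ∀ a : P, s (s a) = a)
    (hnf : ∀ a : P, s a ≠ a)
    (hrev : ∀ a b : P, a ≤ b → s b ≤ s a)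
    (T : Set P) (hT : Coherent s T)
    (hK : {v ∈ PocDual s | T ⊆ v}.Nonempty)
    (u : Set P) (hu : u ∈ PocDual s) :
    (u \ down (s '' T)) ∪ up T ∈ {v ∈ PocDual s | T ⊆ v} ∧
    (u \ ((u \ down (s '' T)) ∪ up T)).ncard = (u ∩ down (s '' T)).ncard ∧
    (∀ v ∈ {v ∈ PocDual s | T ⊆ v},
      (u \ ((u \ down (s '' T)) ∪ up T)).ncard ≤ (u \ v).ncard ∧
      ((u \ v).ncard ≤ (u \ ((u \ down (s '' T)) ∪ up T)).ncard →
        v = (u \ down (s '' T)) ∪ up T)) :=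
  closest_point_projection_general s hinv hrev T hT u hu
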